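/- Let {f_1,f_2,f_3,f_4} be the (4,3)-frame with vectors (1/2)(±1,±1,±1) having an even number of minus signs replaced appropriately (i.e., (1/2)(1,1,1), (1/2)(−1,−1,1), (1/2)(−1,1,−1), (1/2)(1,−1,−1)), and let e_1,e_2,e_3 be the standard basis of R³. Then the seven vectors √(4/7)·f_i (i=1..4) and √(3/7)·e_j (j=1..3) form a uniform Parseval frame for R³ whose maximum correlation is M_∞ = √3/3, i.e., max_{k≠l} |⟨v_k,v_l⟩| = √3/7 and all vectors have norm √(3/7). -/

import Mathlib

/-!
The four vectors `(1/2)(±1, ±1, ±1)` with an even number of minus signs form a Parseval frame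
of `ℝ³`: summing `((±x₀ ± x₁ ± x₂)/2)²` over them, the cross terms cancel. The standard basis is
one as well, and scaling two Parseval frames by `√a` and `√b` with `a + b = 1` and concatenating
them gives a Parseval frame again. With `a = 4/7`, `b = 3/7` the Gram matrix is explicit: `3/7`
on the diagonal, `-1/7` between two cube vectors, `±√3/7` between a cube vector and a basis
vector, and `0` between two basis vectors.
-/

open Real

section ParsevalFrame

variable {ι E : Type*} [Fintype ι] [NormedAddCommGroup E] [InnerProductSpace ℝ E]

def IsParsevalFrame (v : ι → E) : Prop :=
  ∀ x, ∑ k, inner ℝ x (v k) ^ 2 = ‖x‖ ^ 2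

theorem OrthonormalBasis.isParsevalFrame (b : OrthonormalBasis ι ℝ E) : IsParsevalFrame b := by
  intro x
  rw [← real_inner_self_eq_norm_sq, ← b.sum_inner_mul_inner x x]
  simp only [real_inner_comm x, sq]

theorem IsParsevalFrame.append {m n : ℕ} {u : Fin m → E} {w : Fin n → E}
    (hu : IsParsevalFrame u) (hw : IsParsevalFrame w) {a b : ℝ} (ha : 0 ≤ a) (hb : 0 ≤ b)
    (hab : a + b = 1) :
    IsParsevalFrame (Fin.append (fun i => √a • u i) (fun j => √b • w j)) := by
  intro x
  simp only [Fin.sum_univ_add, Fin.append_left, Fin.append_right, real_inner_smul_right,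
    mul_pow, sq_sqrt ha, sq_sqrt hb, ← Finset.mul_sum, hu x, hw x]
  linear_combination ‖x‖ ^ 2 * hab

end ParsevalFrame

noncomputable def cubeFrame : Fin 4 → EuclideanSpace ℝ (Fin 3) :=
  ![(1 / 2 : ℝ) • !₂[1, 1, 1], (1 / 2 : ℝ) • !₂[-1, -1, 1],
    (1 / 2 : ℝ) • !₂[-1, 1, -1], (1 / 2 : ℝ) • !₂[1, -1, -1]]

theorem isParsevalFrame_cubeFrame : IsParsevalFrame cubeFrame := by
  intro x
  simp only [cubeFrame, PiLp.inner_apply, RCLike.inner_apply, conj_trivial, Fin.sum_univ_three,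
    Fin.sum_univ_four, Matrix.cons_val, PiLp.smul_apply, smul_eq_mul, EuclideanSpace.norm_sq_eq,
    norm_eq_abs, sq_abs]
  ring

theorem inner_cubeFrame (i j : Fin 4) :
    inner ℝ (cubeFrame i) (cubeFrame j) = if i = j then 3 / 4 else -1 / 4 := by
  fin_cases i <;> fin_cases j <;>
    simp [cubeFrame, PiLp.inner_apply, Fin.sum_univ_three, -inner_self_eq_norm_sq_to_K] <;> norm_num

theorem abs_inner_cubeFrame_basisFun (i : Fin 4) (j : Fin 3) :
    |inner ℝ (cubeFrame i) (EuclideanSpace.basisFun (Fin 3) ℝ j)| = 1 / 2 := by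
  fin_cases i <;> fin_cases j <;> simp [cubeFrame, PiLp.inner_apply]

noncomputable def sevenFrame : Fin (4 + 3) → EuclideanSpace ℝ (Fin 3) :=
  Fin.append (fun i => √(4 / 7) • cubeFrame i)
    (fun j => √(3 / 7) • EuclideanSpace.basisFun (Fin 3) ℝ j)

theorem sevenFrame_eq_coords : sevenFrame = fun (k : Fin 7) => WithLp.toLp 2
      (![√(4 / 7) • ((1 / 2 : ℝ) • ![1, 1, 1]), √(4 / 7) • ((1 / 2 : ℝ) • ![-1, -1, 1]),
         √(4 / 7) • ((1 / 2 : ℝ) • ![-1, 1, -1]), √(4 / 7) • ((1 / 2 : ℝ) • ![1, -1, -1]),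
         √(3 / 7) • ![1, 0, 0], √(3 / 7) • ![0, 1, 0], √(3 / 7) • ![0, 0, 1]] k) := by
  funext k
  induction k using Fin.addCases with
  | left i => fin_cases i <;> rfl
  | right j =>
    rw [sevenFrame, Fin.append_right, EuclideanSpace.basisFun_apply]
    fin_cases j <;> ext i <;> fin_cases i <;> simp

theorem isParsevalFrame_sevenFrame : IsParsevalFrame sevenFrame :=
  isParsevalFrame_cubeFrame.append (EuclideanSpace.basisFun (Fin 3) ℝ).isParsevalFrame
    (by norm_num) (by norm_num) (by norm_num)

theorem inner_sevenFrame_castAdd_castAdd (i j : Fin 4) :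
    inner ℝ (sevenFrame (Fin.castAdd 3 i)) (sevenFrame (Fin.castAdd 3 j)) =
      if i = j then 3 / 7 else -1 / 7 := by
  simp only [sevenFrame, Fin.append_left, real_inner_smul_left, real_inner_smul_right,
    inner_cubeFrame, ← mul_assoc, mul_self_sqrt (by norm_num : (0 : ℝ) ≤ 4 / 7)]
  split_ifs <;> norm_num

theorem abs_inner_sevenFrame_castAdd_natAdd (i : Fin 4) (j : Fin 3) :
    |inner ℝ (sevenFrame (Fin.castAdd 3 i)) (sevenFrame (Fin.natAdd 4 j))| = √3 / 7 := by
  have sqrt_mul_sqrt : √(4 / 7) * √(3 / 7) = 2 * √3 / 7 := by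
    rw [← sqrt_mul (by norm_num), show (4 / 7 : ℝ) * (3 / 7) = (2 / 7) ^ 2 * 3 by norm_num,
      sqrt_mul (by positivity), sqrt_sq (by norm_num)]
    ring
  rw [sevenFrame, Fin.append_left, Fin.append_right, real_inner_smul_left, real_inner_smul_right,
    ← mul_assoc, sqrt_mul_sqrt, abs_mul, abs_inner_cubeFrame_basisFun,
    abs_of_nonneg (by positivity)]
  ring

theorem inner_sevenFrame_natAdd_natAdd (i j : Fin 3) :
    inner ℝ (sevenFrame (Fin.natAdd 4 i)) (sevenFrame (Fin.natAdd 4 j)) =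
      if i = j then 3 / 7 else 0 := by
  simp only [sevenFrame, Fin.append_right, real_inner_smul_left, real_inner_smul_right,
    orthonormal_iff_ite.mp (EuclideanSpace.basisFun (Fin 3) ℝ).orthonormal, ← mul_assoc,
    mul_self_sqrt (by norm_num : (0 : ℝ) ≤ 3 / 7)]
  split_ifs <;> norm_num

theorem norm_sevenFrame (k : Fin (4 + 3)) : ‖sevenFrame k‖ = √(3 / 7) := by
  rw [norm_eq_sqrt_real_inner]
  induction k using Fin.addCases with
  | left i => rw [inner_sevenFrame_castAdd_castAdd, if_pos rfl]
  | right j => rw [inner_sevenFrame_natAdd_natAdd, if_pos rfl]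

theorem abs_inner_sevenFrame_le {k l : Fin (4 + 3)} (hkl : k ≠ l) :
    |inner ℝ (sevenFrame k) (sevenFrame l)| ≤ √3 / 7 := by
  have one_le_sqrt_three : 1 ≤ √3 := one_le_sqrt.mpr (by norm_num)
  induction k using Fin.addCases with
  | left i =>
    induction l using Fin.addCases with
    | left j =>
      rw [inner_sevenFrame_castAdd_castAdd, if_neg (by rintro rfl; exact hkl rfl),
        abs_of_neg (by norm_num)]
      linarith
    | right j => rw [abs_inner_sevenFrame_castAdd_natAdd]
  | right i =>
    induction l using Fin.addCases with
    | left j => rw [real_inner_comm, abs_inner_sevenFrame_castAdd_natAdd]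
    | right j =>
      rw [inner_sevenFrame_natAdd_natAdd, if_neg (by rintro rfl; exact hkl rfl), abs_zero]
      positivity

/-- The seven vectors `√(4/7)·f_i` (the four cube-vertex frame vectors) together with
`√(3/7)·e_j` (the standard basis) form a uniform Parseval frame for `R³` with all norms
`√(3/7)`, largest cross inner product `√3/7`, and maximum correlation
`M_∞ = (7/3)·(√3/7) = √3/3`. -/
theorem seven_three_frame
    (v : Fin 7 → EuclideanSpace ℝ (Fin 3))
    (hv : v = fun (k : Fin 7) => (WithLp.equiv 2 (Fin 3 → ℝ)).symm
      (![Real.sqrt (4 / 7) • ((1 / 2 : ℝ) • ![1, 1, 1]),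
         Real.sqrt (4 / 7) • ((1 / 2 : ℝ) • ![-1, -1, 1]),
         Real.sqrt (4 / 7) • ((1 / 2 : ℝ) • ![-1, 1, -1]),
         Real.sqrt (4 / 7) • ((1 / 2 : ℝ) • ![1, -1, -1]),
         Real.sqrt (3 / 7) • ![1, 0, 0],
         Real.sqrt (3 / 7) • ![0, 1, 0],
         Real.sqrt (3 / 7) • ![0, 0, 1]] k)) :
    (∀ x : EuclideanSpace ℝ (Fin 3), ∑ k : Fin 7, (inner ℝ x (v k) : ℝ) ^ 2 = ‖x‖ ^ 2) ∧
    (∀ k, ‖v k‖ = Real.sqrt (3 / 7)) ∧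
    IsGreatest {x : ℝ | ∃ k l : Fin 7, k ≠ l ∧ x = |(inner ℝ (v k) (v l) : ℝ)|}
      (Real.sqrt 3 / 7) ∧
    (7 / 3 : ℝ) * (Real.sqrt 3 / 7) = Real.sqrt 3 / 3 := by
  obtain rfl : v = sevenFrame := hv.trans sevenFrame_eq_coords.symm
  refine ⟨isParsevalFrame_sevenFrame, norm_sevenFrame, ⟨?_, ?_⟩, by ring⟩
  · exact ⟨0, 4, by decide, (abs_inner_sevenFrame_castAdd_natAdd 0 0).symm⟩
  · rintro _ ⟨k, l, hkl, rfl⟩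
    exact abs_inner_sevenFrame_le hkl
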